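/- Let x ∈ (0,∞)^d be a positive histogram with cumulative sum w_x = Σ_{i=1}^d x^i and normalization x̃ = x/w_x, and let h̃_1, …, h̃_n be frequency histograms with d bins and π_1, …, π_n > 0 weights with Σ_j π_j = 1. Then Σ_{j=1}^n π_j J(x, h̃_j) = Σ_{j=1}^n π_j J(x̃, h̃_j) + (w_x − 1)·( Σ_{j=1}^n π_j KL(x̃ : h̃_j) + log w_x ). -/

import Mathlib

/-!
Since `log (q/p) = -log (p/q)`, the Jeffreys divergence is the symmetrised Kullback–Leibler
divergence `J(p,q) = KL(p:q) + KL(q:p)`. Rescaling `x` to `x̃ = x / w_x` shifts each logarithm by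
`log w_x`, so `KL(x̃:q) = KL(x:q)/w_x - log w_x` and `KL(q:x̃) = KL(q:x) + log w_x` when `q` is a
frequency histogram. Substituting gives the identity for a single `q`, and averaging it against
weights summing to one gives the weighted identity.
-/

open scoped BigOperators

/-- Jeffreys divergence between positive histograms with `d` bins. -/
noncomputable def Jeffreys {d : ℕ} (p q : Fin d → ℝ) : ℝ :=
  ∑ i, (p i - q i) * Real.log (p i / q i)

/-- Kullback-Leibler term between positive histograms with `d` bins. -/
noncomputable def KL {d : ℕ} (p q : Fin d → ℝ) : ℝ :=
  ∑ i, p i * Real.log (p i / q i)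

open Finset

theorem jeffreys_eq_kl_add_kl {d : ℕ} (p q : Fin d → ℝ) : Jeffreys p q = KL p q + KL q p := by
  simp only [Jeffreys, KL, ← sum_add_distrib]
  refine sum_congr rfl fun i _ => ?_
  rw [← inv_div, Real.log_inv]
  ring

theorem kl_div_const_left {d : ℕ} {p q : Fin d → ℝ} {c : ℝ} (hp : ∀ i, p i ≠ 0)
    (hq : ∀ i, q i ≠ 0) (hc : c ≠ 0) :
    KL (fun i => p i / c) q = (KL p q - (∑ i, p i) * Real.log c) / c := by
  simp only [KL, sum_mul, ← sum_sub_distrib, sum_div]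
  refine sum_congr rfl fun i _ => ?_
  rw [div_right_comm, Real.log_div (div_ne_zero (hp i) (hq i)) hc]
  ring

theorem kl_div_const_right {d : ℕ} {p q : Fin d → ℝ} {c : ℝ} (hp : ∀ i, p i ≠ 0)
    (hq : ∀ i, q i ≠ 0) (hc : c ≠ 0) :
    KL q (fun i => p i / c) = KL q p + (∑ i, q i) * Real.log c := by
  simp only [KL, sum_mul, ← sum_add_distrib]
  refine sum_congr rfl fun i _ => ?_
  rw [div_div_eq_mul_div, mul_div_right_comm, Real.log_mul (div_ne_zero (hq i) (hp i)) hc]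
  ring

theorem jeffreys_normalization_identity {d : ℕ} {x q : Fin d → ℝ} (hx : ∀ i, 0 < x i)
    (hq : ∀ i, q i ≠ 0) (hq1 : ∑ i, q i = 1) :
    Jeffreys x q = Jeffreys (fun i => x i / ∑ k, x k) q +
      ((∑ i, x i) - 1) * (KL (fun i => x i / ∑ k, x k) q + Real.log (∑ i, x i)) := by
  have hw : 0 < ∑ k, x k :=
    sum_pos (fun i _ => hx i) (nonempty_of_sum_ne_zero (hq1 ▸ one_ne_zero))
  have hx' : ∀ i, x i ≠ 0 := fun i => (hx i).ne'
  rw [jeffreys_eq_kl_add_kl, jeffreys_eq_kl_add_kl, kl_div_const_left hx' hq hw.ne',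
    kl_div_const_right hx' hq hw.ne', hq1]
  field_simp
  ring

theorem jeffreys_normalization_identity_weighted_general
    (d n : ℕ) (x : Fin d → ℝ) (hx : ∀ i, 0 < x i)
    (h : Fin n → Fin d → ℝ) (hpos : ∀ j i, 0 < h j i) (hfreq : ∀ j, ∑ i, h j i = 1)
    (π : Fin n → ℝ) (hπ1 : ∑ j, π j = 1) :
    ∑ j, π j * Jeffreys x (h j) =
      (∑ j, π j * Jeffreys (fun i => x i / ∑ k, x k) (h j)) +
        ((∑ i, x i) - 1) *
          ((∑ j, π j * KL (fun i => x i / ∑ k, x k) (h j)) + Real.log (∑ i, x i)) := by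
  simp only [jeffreys_normalization_identity hx (fun i => (hpos _ i).ne') (hfreq _), mul_add,
    sum_add_distrib, mul_left_comm (π _), ← mul_sum, ← sum_mul, hπ1, one_mul]

/-- weighted version of the normalization identity:
`J(x, H̃) = J(x̃, H̃) + (w_x − 1)·(KL(x̃ : H̃) + log w_x)`. -/
theorem jeffreys_normalization_identity_weighted
    (d n : ℕ) (x : Fin d → ℝ) (hx : ∀ i, 0 < x i)
    (h : Fin n → Fin d → ℝ) (hpos : ∀ j i, 0 < h j i) (hfreq : ∀ j, ∑ i, h j i = 1)
    (π : Fin n → ℝ) (hπ : ∀ j, 0 < π j) (hπ1 : ∑ j, π j = 1) :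
    ∑ j, π j * Jeffreys x (h j) =
      (∑ j, π j * Jeffreys (fun i => x i / ∑ k, x k) (h j)) +
        ((∑ i, x i) - 1) *
          ((∑ j, π j * KL (fun i => x i / ∑ k, x k) (h j)) + Real.log (∑ i, x i)) :=
  jeffreys_normalization_identity_weighted_general d n x hx h hpos hfreq π hπ1
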